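/- Fix α > 0, m, d, n ∈ ℕ. The map that sends a data set D = ((x^1, …, x^m), 𝕐) ∈ (ℝ^d)^m × ℝ^{m×n} to the solution u_𝕏 = (α I + M_𝕏)^{−1} M_𝕏 𝕐 of the finite linear system, where M_𝕏 is the kernel matrix with entries (M_𝕏)_{ij} = exp(−2π|x^i − x^j|), is well defined and continuous on all of (ℝ^d)^m × ℝ^{m×n}. -/

import Mathlib

open Real

noncomputable section

/-- The kernel matrix `M_𝕏` with entries `(M_𝕏)_{ij} = exp(-2π|xⁱ - xʲ|)`. -/
def kernelMatrix (d m : ℕ) (x : Fin m → EuclideanSpace ℝ (Fin d)) :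
    Matrix (Fin m) (Fin m) ℝ :=
  Matrix.of fun i j => Real.exp (-(2 * π) * ‖x i - x j‖)

/-! `αI + M_𝕏` is positive definite because the Laplace kernel `exp (-c‖x - y‖)` is positive
semidefinite. By the subordination formula `e^{-b} = (2/√π) ∫₀^∞ e^{-s²} e^{-b²/(4s²)} ds` it is a
positive mixture of Gaussian kernels `exp (-t‖x - y‖²)`, and a Gaussian kernel is the Hadamard
product of the rank-one matrix `(e^{-t‖xᵢ‖²} e^{-t‖xⱼ‖²})` with the entrywise exponential of the
Gram matrix `(2t⟪xᵢ, xⱼ⟫)`, which is positive semidefinite by the Schur product theorem. So the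
determinant of `αI + M_𝕏` never vanishes and the adjugate formula makes the inverse continuous. -/

open Set MeasureTheory Matrix Nat

section Subordination

variable {a : ℝ}

theorem integral_Ioi_div_sq_mul_comp_div (ha : 0 < a) (f : ℝ → ℝ) :
    ∫ s in Ioi 0, a / s ^ 2 * f (a / s) = ∫ s in Ioi 0, f s := by
  have hderiv : ∀ s ∈ Ioi (0 : ℝ),
      HasDerivWithinAt (fun s => a * s⁻¹) (a * -(s ^ 2)⁻¹) (Ioi 0) s :=
    fun s hs => ((hasDerivAt_inv (ne_of_gt hs)).const_mul a).hasDerivWithinAt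
  have hinj : InjOn (fun s : ℝ => a * s⁻¹) (Ioi 0) :=
    ((mul_right_injective₀ ha.ne').comp inv_injective).injOn
  have himage : (fun s : ℝ => a * s⁻¹) '' Ioi 0 = Ioi 0 := by
    ext u
    refine ⟨?_, fun hu => ⟨a * u⁻¹, mul_pos ha (inv_pos.2 hu), by field_simp⟩⟩
    rintro ⟨s, hs, rfl⟩
    exact mul_pos ha (inv_pos.2 hs)
  have hsub := integral_image_eq_integral_abs_deriv_smul measurableSet_Ioi hderiv hinj f
  rw [himage] at hsub
  rw [hsub]
  refine setIntegral_congr_fun measurableSet_Ioi fun s _ => ?_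
  simp [abs_of_pos ha, div_eq_mul_inv]

theorem strictMonoOn_sub_div (ha : 0 < a) : StrictMonoOn (fun s => s - a / s) (Ioi 0) :=
  fun _ hs _ _ hst => sub_lt_sub hst (div_lt_div_of_pos_left ha hs hst)

theorem image_sub_div_Ioi (ha : 0 < a) : (fun s => s - a / s) '' Ioi 0 = univ := by
  refine eq_univ_of_forall fun t => ?_
  set r := √(t ^ 2 + 4 * a)
  have hr : r ^ 2 = t ^ 2 + 4 * a := sq_sqrt (by positivity)
  have htr : |t| < r := (lt_sqrt (abs_nonneg t)).2 (by rw [sq_abs]; linarith)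
  have hpos : 0 < (t + r) / 2 := by linarith [neg_abs_le t]
  have hquot : a / ((t + r) / 2) = (r - t) / 2 := by
    rw [div_eq_iff hpos.ne']
    linear_combination (-1 / 4 : ℝ) * hr
  exact ⟨(t + r) / 2, hpos, by simp only [hquot]; ring⟩

theorem hasDerivAt_sub_div {s : ℝ} (hs : s ≠ 0) :
    HasDerivAt (fun s => s - a / s) (1 + a / s ^ 2) s := by
  have h := (hasDerivAt_id' s).sub ((hasDerivAt_inv hs).const_mul a)
  rw [show 1 - a * -(s ^ 2)⁻¹ = 1 + a / s ^ 2 by ring] at h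
  exact h.congr_of_eventuallyEq (.of_forall fun x => by simp [div_eq_mul_inv])

theorem integral_Ioi_exp_neg_sq_sub_div (ha : 0 ≤ a) :
    ∫ s in Ioi 0, Real.exp (-(s - a / s) ^ 2) = √π / 2 := by
  rcases ha.eq_or_lt with rfl | ha
  · simpa using integral_gaussian_Ioi 1
  -- `t = s - a / s` maps `Ioi 0` onto `ℝ`, so `∫ (1 + a / s²) g = √π`; the inversion `s ↦ a / s`
  -- fixes `g` and shows that the two summands have the same integral.
  set g : ℝ → ℝ := fun s => Real.exp (-(s - a / s) ^ 2)
  have hderiv : ∀ s ∈ Ioi (0 : ℝ),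
      HasDerivWithinAt (fun s => s - a / s) (1 + a / s ^ 2) (Ioi 0) s :=
    fun s hs => (hasDerivAt_sub_div (mem_Ioi.1 hs).ne').hasDerivWithinAt
  have hjac : ∀ s ∈ Ioi (0 : ℝ),
      |1 + a / s ^ 2| • Real.exp (-(s - a / s) ^ 2) = (1 + a / s ^ 2) * g s :=
    fun s _ => by rw [abs_of_pos (by positivity), smul_eq_mul]
  have hgauss : Integrable fun t : ℝ => Real.exp (-t ^ 2) := by
    simpa using integrable_exp_neg_mul_sq one_pos
  have hh_int : IntegrableOn (fun s => (1 + a / s ^ 2) * g s) (Ioi 0) := by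
    have := (integrableOn_image_iff_integrableOn_abs_deriv_smul measurableSet_Ioi hderiv
      (strictMonoOn_sub_div ha).injOn fun t => Real.exp (-t ^ 2)).1
      (by rw [image_sub_div_Ioi ha]; exact hgauss.integrableOn)
    exact this.congr_fun hjac measurableSet_Ioi
  have hh : ∫ s in Ioi 0, (1 + a / s ^ 2) * g s = √π := by
    have hsub := integral_image_eq_integral_abs_deriv_smul measurableSet_Ioi hderiv
      (strictMonoOn_sub_div ha).injOn fun t => Real.exp (-t ^ 2)
    rw [image_sub_div_Ioi ha, Measure.restrict_univ,
      setIntegral_congr_fun measurableSet_Ioi hjac] at hsub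
    rw [← hsub]
    simpa using integral_gaussian 1
  have hg_int : IntegrableOn g (Ioi 0) := by
    refine hh_int.mono' (by fun_prop)
      ((ae_restrict_iff' measurableSet_Ioi).2 (ae_of_all _ fun s _ => ?_))
    rw [norm_of_nonneg (exp_nonneg _)]
    exact le_mul_of_one_le_left (exp_nonneg _) (by simp only [le_add_iff_nonneg_right]; positivity)
  have hinv : ∫ s in Ioi 0, ((1 + a / s ^ 2) * g s - g s) = ∫ s in Ioi 0, g s := by
    rw [← integral_Ioi_div_sq_mul_comp_div ha g]
    refine setIntegral_congr_fun measurableSet_Ioi fun s _ => ?_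
    simp only [g, div_div_cancel₀ ha.ne', ← neg_sub s, neg_sq]
    ring
  rw [integral_sub hh_int hg_int, hh] at hinv
  linarith

theorem exp_neg_eq_integral {b : ℝ} (hb : 0 ≤ b) :
    Real.exp (-b) = 2 / √π * ∫ s in Ioi 0, Real.exp (-s ^ 2 - b ^ 2 / (4 * s ^ 2)) := by
  have hsplit : ∀ s ∈ Ioi (0 : ℝ), Real.exp (-s ^ 2 - b ^ 2 / (4 * s ^ 2)) =
      Real.exp (-b) * Real.exp (-(s - b / 2 / s) ^ 2) := by
    intro s hs
    rw [← Real.exp_add]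
    congr 1
    field_simp [(mem_Ioi.1 hs).ne']
    ring
  rw [setIntegral_congr_fun measurableSet_Ioi hsplit, integral_const_mul,
    integral_Ioi_exp_neg_sq_sub_div (by positivity)]
  field_simp [(sqrt_pos.2 pi_pos).ne']

theorem integrableOn_exp_neg_sq_sub_div_sq (b : ℝ) :
    IntegrableOn (fun s => Real.exp (-s ^ 2 - b ^ 2 / (4 * s ^ 2))) (Ioi 0) := by
  refine (integrable_exp_neg_mul_sq one_pos).integrableOn.mono' (by fun_prop)
    (ae_of_all _ fun s => ?_)
  rw [norm_of_nonneg (exp_nonneg _), exp_le_exp]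
  have : 0 ≤ b ^ 2 / (4 * s ^ 2) := by positivity
  linarith

end Subordination

namespace Matrix

variable {n : Type*} [Fintype n]

theorem isClosed_setOf_posSemidef : IsClosed {A : Matrix n n ℝ | A.PosSemidef} := by
  simp only [posSemidef_iff_dotProduct_mulVec, ofPred_and, ofPred_forall]
  exact (isClosed_eq continuous_id.matrix_conjTranspose continuous_id).inter <|
    isClosed_iInter fun v => isClosed_le continuous_const <|
      continuous_const.dotProduct (continuous_id.matrix_mulVec continuous_const)

theorem PosSemidef.map_pow {A : Matrix n n ℝ} (hA : A.PosSemidef) (k : ℕ) :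
    (A.map (· ^ k)).PosSemidef := by
  induction k with
  | zero =>
    have hones : A.map (· ^ 0) = vecMulVec 1 (star 1) := by ext; simp [vecMulVec]
    exact hones ▸ posSemidef_vecMulVec_self_star 1
  | succ k ih =>
    have hsucc : A.map (· ^ (k + 1)) = A ⊙ A.map (· ^ k) := by ext; exact pow_succ' _ _
    exact hsucc ▸ hA.hadamard ih

theorem PosSemidef.map_exp {A : Matrix n n ℝ} (hA : A.PosSemidef) :
    (A.map Real.exp).PosSemidef := by
  have hsum : HasSum (fun k : ℕ => (k ! : ℝ)⁻¹ • A.map (· ^ k)) (A.map Real.exp) :=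
    Pi.hasSum.2 fun i => Pi.hasSum.2 fun j => by
      simpa [Real.exp_eq_exp_ℝ, div_eq_inv_mul] using
        NormedSpace.expSeries_div_hasSum_exp (A i j)
  exact isClosed_setOf_posSemidef.mem_of_tendsto hsum.tendsto_sum_nat <| .of_forall fun _ =>
    posSemidef_sum _ fun k _ => (hA.map_pow k).smul (by positivity)

theorem posSemidef_integral {X : Type*} [MeasurableSpace X] {μ : Measure X}
    {K : X → Matrix n n ℝ} (hK : ∀ᵐ s ∂μ, (K s).PosSemidef)
    (hint : ∀ i j, Integrable (fun s => K s i j) μ) :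
    (of fun i j => ∫ s, K s i j ∂μ).PosSemidef := by
  refine .of_dotProduct_mulVec_nonneg ?_ fun v => ?_
  · ext i j
    exact integral_congr_ae (hK.mono fun s hs => hs.isHermitian.apply i j)
  · have hterm : ∀ i j, Integrable (fun s => v i * (K s i j * v j)) μ := fun i j =>
      ((hint i j).mul_const _).const_mul _
    have hquad : star v ⬝ᵥ (of fun i j => ∫ s, K s i j ∂μ) *ᵥ v =
        ∫ s, star v ⬝ᵥ K s *ᵥ v ∂μ := by
      simp only [dotProduct, mulVec, of_apply, star_trivial, Finset.mul_sum]
      rw [integral_finsetSum _ fun i _ => integrable_finsetSum _ fun j _ => hterm i j]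
      refine Finset.sum_congr rfl fun i _ => ?_
      rw [integral_finsetSum _ fun j _ => hterm i j]
      simp only [integral_const_mul, integral_mul_const]
    rw [hquad]
    exact integral_nonneg_of_ae (hK.mono fun s hs => hs.dotProduct_mulVec_nonneg v)

theorem posSemidef_exp_neg_mul_norm_sub_sq {E : Type*} [NormedAddCommGroup E]
    [InnerProductSpace ℝ E] {c : ℝ} (hc : 0 ≤ c) (x : n → E) :
    (of fun i j => Real.exp (-c * ‖x i - x j‖ ^ 2)).PosSemidef := by
  have h := (posSemidef_vecMulVec_self_star fun i => Real.exp (-c * ‖x i‖ ^ 2)).hadamard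
    ((posSemidef_gram ℝ x).smul (by positivity : 0 ≤ 2 * c)).map_exp
  have hexp : (of fun i j => Real.exp (-c * ‖x i - x j‖ ^ 2)) =
      vecMulVec (fun i => Real.exp (-c * ‖x i‖ ^ 2)) (star fun i => Real.exp (-c * ‖x i‖ ^ 2)) ⊙
        ((2 * c) • gram ℝ x).map Real.exp := by
    ext i j
    simp only [of_apply, hadamard_apply, vecMulVec_apply, star_trivial, map_apply, smul_apply,
      gram_apply, smul_eq_mul, ← Real.exp_add, norm_sub_sq_real]
    ring_nf
  exact hexp ▸ h

theorem posSemidef_exp_neg_mul_norm_sub {E : Type*} [NormedAddCommGroup E]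
    [InnerProductSpace ℝ E] {c : ℝ} (hc : 0 ≤ c) (x : n → E) :
    (of fun i j => Real.exp (-c * ‖x i - x j‖)).PosSemidef := by
  set K : ℝ → Matrix n n ℝ := fun s =>
    of fun i j => 2 / √π * Real.exp (-s ^ 2 - (c * ‖x i - x j‖) ^ 2 / (4 * s ^ 2))
  have hK : ∀ s, (K s).PosSemidef := fun s => by
    have hgauss := (posSemidef_exp_neg_mul_norm_sub_sq (c := c ^ 2 / (4 * s ^ 2)) (by positivity)
      x).smul (by positivity : 0 ≤ 2 / √π * Real.exp (-s ^ 2))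
    convert hgauss using 1
    ext i j
    simp only [K, of_apply, smul_apply, smul_eq_mul, mul_assoc, ← Real.exp_add]
    ring_nf
  have hK_int : ∀ i j, IntegrableOn (fun s => K s i j) (Ioi 0) := fun i j =>
    (integrableOn_exp_neg_sq_sub_div_sq _).const_mul _
  convert posSemidef_integral (ae_of_all _ hK) hK_int using 1
  ext i j
  simp only [K, of_apply, integral_const_mul,
    ← exp_neg_eq_integral (by positivity : 0 ≤ c * ‖x i - x j‖)]
  ring_nf

end Matrix

theorem Continuous.matrix_inv {X 𝕜 n : Type*} [TopologicalSpace X] [Field 𝕜] [TopologicalSpace 𝕜]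
    [IsTopologicalRing 𝕜] [ContinuousInv₀ 𝕜] [Fintype n] [DecidableEq n] {A : X → Matrix n n 𝕜}
    (hA : Continuous A) (hdet : ∀ x, (A x).det ≠ 0) : Continuous fun x => (A x)⁻¹ :=
  continuous_iff_continuousAt.2 fun x => ContinuousAt.comp (continuousAt_matrix_inv _ <| by
    rw [Ring.inverse_eq_inv']; exact continuousAt_inv₀ (hdet x)) hA.continuousAt

theorem posSemidef_kernelMatrix (d m : ℕ) (x : Fin m → EuclideanSpace ℝ (Fin d)) :
    (kernelMatrix d m x).PosSemidef :=
  posSemidef_exp_neg_mul_norm_sub (by positivity) x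

theorem continuous_kernelMatrix (d m : ℕ) : Continuous (kernelMatrix d m) :=
  continuous_matrix fun i j => by unfold kernelMatrix; fun_prop

/-- for fixed `α > 0`, the map sending a data set
`D = ((x¹, …, x^m), 𝕐)` to the solution `u_𝕏 = (αI + M_𝕏)⁻¹ M_𝕏 𝕐` of the finite
linear system is well defined (the matrix `αI + M_𝕏` is always invertible) and
continuous on all of `(ℝ^d)^m × ℝ^{m×n}`. -/
theorem finite_system_solution_continuous (d m n : ℕ) (α : ℝ) (hα : 0 < α) :
    (∀ x : Fin m → EuclideanSpace ℝ (Fin d),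
      IsUnit (α • (1 : Matrix (Fin m) (Fin m) ℝ) + kernelMatrix d m x)) ∧
    Continuous (fun p : (Fin m → EuclideanSpace ℝ (Fin d)) × Matrix (Fin m) (Fin n) ℝ =>
      (α • (1 : Matrix (Fin m) (Fin m) ℝ) + kernelMatrix d m p.1)⁻¹ *
        (kernelMatrix d m p.1 * p.2)) := by
  have hpd : ∀ x, (α • (1 : Matrix (Fin m) (Fin m) ℝ) + kernelMatrix d m x).PosDef := fun x =>
    (PosDef.one.smul hα).add_posSemidef (posSemidef_kernelMatrix d m x)
  refine ⟨fun x => (hpd x).isUnit, ?_⟩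
  have hM : Continuous fun p : (Fin m → EuclideanSpace ℝ (Fin d)) × Matrix (Fin m) (Fin n) ℝ =>
      kernelMatrix d m p.1 := (continuous_kernelMatrix d m).comp continuous_fst
  exact ((continuous_const.add hM).matrix_inv fun p => (hpd p.1).det_pos.ne').matrix_mul
    (hM.matrix_mul continuous_snd)
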